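/- arXiv:1210.5740 — 5 statements merged into one kernel-verified Lean document; each statement's English description precedes it below -/
import Mathlib

section
/- Let w ∈ S_n be an involution and α = ε_j − ε_i (j < i) a positive root of type A_{n−1}. Then the transposition s_α = (i, j) satisfies s_α ≤ w in the Bruhat order if and only if there exists a root ε_s − ε_r ∈ Supp(w) with s ≤ j and i ≤ r. -/
/-- The number of inversions of a permutation, i.e. its Coxeter length in type `A`. -/
def invCount {n : ℕ} (w : Equiv.Perm (Fin n)) : ℕ :=
  (Finset.univ.filter fun p : Fin n × Fin n => p.1 < p.2 ∧ w p.2 < w p.1).card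

/-- The Bruhat order on `Sₙ`. -/
def BruhatLE {n : ℕ} (v w : Equiv.Perm (Fin n)) : Prop :=
  Relation.ReflTransGen
    (fun x y => invCount x < invCount y ∧ ∃ i j : Fin n, y = x * Equiv.swap i j) v w

/-! A Bruhat step `x ⟶ x * (p q)` with `p < q` raises the inversion count exactly when
`x p < x q`, so it never lowers the largest value taken on the positions `≤ j`. Hence
`∃ a ≤ j, i ≤ x a`, true for `x = (i j)`, holds for every `x ≥ (i j)`, and for an involution `w`
the pair `(w a, a)` is a root of the support of `w`. Conversely `(i j) ≤ (r s)` for nested pairs,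
and `(r s) ≤ w` because `w = (r s) * v` with `v` an involution fixing `r` and `s`, whose
transpositions raise the length one at a time. -/

open Equiv Equiv.Perm Finset

variable {n : ℕ}

def inversions (x : Perm (Fin n)) : Finset (Fin n × Fin n) :=
  univ.filter fun ab => ab.1 < ab.2 ∧ x ab.2 < x ab.1

@[simp]
lemma mem_inversions {x : Perm (Fin n)} {a b : Fin n} :
    (a, b) ∈ inversions x ↔ a < b ∧ x b < x a := by
  simp [inversions]

lemma invCount_eq_card_inversions (x : Perm (Fin n)) : invCount x = #(inversions x) := rfl

lemma apply_swap_lt_of_swap_lt {α : Type*} [LinearOrder α] {x : Perm α} {p q a b : α}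
    (hpq : p < q) (hx : x p < x q) (hab : a < b) (hba : x b < x a)
    (hswap : swap p q b < swap p q a) :
    x (swap p q b) < x (swap p q a) := by
  simp only [swap_apply_def] at *
  split_ifs at * <;> subst_vars <;> order

lemma invCount_lt_invCount_mul_swap {x : Perm (Fin n)} {p q : Fin n} (hpq : p < q)
    (hx : x p < x q) : invCount x < invCount (x * swap p q) := by
  set t := swap p q
  have htt : ∀ a, t (t a) = a := swap_apply_self p q
  -- An inversion `(a, b)` of `x` gives the inversion `(t a, t b)` of `x * t`, unless `t`
  -- reverses the pair, in which case `(a, b)` itself stays an inversion.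
  let φ : Fin n × Fin n → Fin n × Fin n := fun ab =>
    if t ab.1 < t ab.2 then (t ab.1, t ab.2) else ab
  have hmaps : Set.MapsTo φ (inversions x) ((inversions (x * t)).erase (p, q)) := by
    rintro ⟨a, b⟩ hab
    rw [mem_coe, mem_inversions] at hab
    simp only [φ, mem_coe]
    split_ifs with ht
    · refine mem_erase.2 ⟨fun h => ?_, mem_inversions.2 ⟨ht, by simpa [htt] using hab.2⟩⟩
      simp only [Prod.mk.injEq, t, swap_apply_eq_iff, swap_apply_left, swap_apply_right] at h
      order
    · refine mem_erase.2 ⟨fun h => ?_, mem_inversions.2 ⟨hab.1, ?_⟩⟩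
      · obtain ⟨rfl, rfl⟩ := Prod.mk.inj h
        order
      · exact apply_swap_lt_of_swap_lt hpq hx hab.1 hab.2
          (lt_of_le_of_ne (not_lt.1 ht) (t.injective.ne hab.1.ne'))
  have hinj : Set.InjOn φ (inversions x) := by
    rintro ⟨a, b⟩ hab ⟨c, d⟩ hcd h
    rw [mem_coe, mem_inversions] at hab hcd
    simp only [φ] at h
    split_ifs at h with h1 h2 h2
    · simpa using h
    · obtain ⟨rfl, rfl⟩ := Prod.mk.inj h
      simp only [htt] at h2
      exact absurd hab.1 h2
    · obtain ⟨rfl, rfl⟩ := Prod.mk.inj h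
      simp only [htt] at h1
      exact absurd hcd.1 h1
    · exact h
  have hpq_mem : (p, q) ∈ inversions (x * t) := by
    simpa [t] using ⟨hpq, hx⟩
  rw [invCount_eq_card_inversions, invCount_eq_card_inversions]
  calc #(inversions x)
      ≤ #((inversions (x * t)).erase (p, q)) := card_le_card_of_injOn φ hmaps hinj
    _ < #(inversions (x * t)) := card_erase_lt_of_mem hpq_mem

lemma invCount_lt_invCount_mul_swap_iff {x : Perm (Fin n)} {p q : Fin n} (hpq : p < q) :
    invCount x < invCount (x * swap p q) ↔ x p < x q := by
  refine ⟨fun h => ?_, invCount_lt_invCount_mul_swap hpq⟩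
  by_contra hx
  have hlt : (x * swap p q) p < (x * swap p q) q := by
    simpa using lt_of_le_of_ne (not_lt.1 hx) (x.injective.ne hpq.ne')
  have := invCount_lt_invCount_mul_swap hpq hlt
  rw [mul_swap_mul_self] at this
  omega

lemma exists_swap_eq_of_invCount_lt {x : Perm (Fin n)} {p q : Fin n}
    (h : invCount x < invCount (x * swap p q)) :
    ∃ a b, a < b ∧ x a < x b ∧ swap p q = swap a b := by
  rcases lt_trichotomy p q with hpq | rfl | hqp
  · exact ⟨p, q, hpq, (invCount_lt_invCount_mul_swap_iff hpq).1 h, rfl⟩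
  · rw [swap_self, ← Perm.one_def, mul_one] at h
    exact absurd h (lt_irrefl _)
  · rw [swap_comm] at h ⊢
    exact ⟨q, p, hqp, (invCount_lt_invCount_mul_swap_iff hqp).1 h, rfl⟩

lemma bruhatLE_mul_swap {x : Perm (Fin n)} {p q : Fin n} (hpq : p < q) (hx : x p < x q) :
    BruhatLE x (x * swap p q) :=
  .single ⟨invCount_lt_invCount_mul_swap hpq hx, p, q, rfl⟩

lemma exists_le_le_apply_mul_swap {α : Type*} [LinearOrder α] {x : Perm α} {i j p q : α}
    (hpq : p < q) (hx : x p < x q) (h : ∃ a ≤ j, i ≤ x a) :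
    ∃ a ≤ j, i ≤ (x * swap p q) a := by
  obtain ⟨a, haj, hia⟩ := h
  by_cases hap : a = p
  · subst hap
    exact ⟨a, haj, by simpa using (hia.trans_lt hx).le⟩
  by_cases haq : a = q
  · subst haq
    exact ⟨p, hpq.le.trans haj, by simpa using hia⟩
  · exact ⟨a, haj, by simpa [swap_apply_of_ne_of_ne hap haq] using hia⟩

lemma BruhatLE.exists_le_le_apply {v w : Perm (Fin n)} {i j : Fin n} (hvw : BruhatLE v w)
    (hv : ∃ a ≤ j, i ≤ v a) : ∃ a ≤ j, i ≤ w a := by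
  induction hvw with
  | refl => exact hv
  | tail _ hstep ih =>
    obtain ⟨hlt, p, q, rfl⟩ := hstep
    obtain ⟨a, b, hab, hx, hswap⟩ := exists_swap_eq_of_invCount_lt hlt
    rw [hswap]
    exact exists_le_le_apply_mul_swap hab hx ih

lemma swap_le_swap_of_lt_of_lt_left {a b c : Fin n} (hab : a < b) (hbc : b < c) :
    BruhatLE (swap a b) (swap a c) := by
  have hac := hab.trans hbc
  have hconj : swap a b * swap b c * swap a b = swap a c := by
    ext k
    simp only [Perm.mul_apply, swap_apply_def]
    split_ifs <;> subst_vars <;> order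
  have hstep : BruhatLE (swap a b * swap b c) (swap a b * swap b c * swap a b) :=
    bruhatLE_mul_swap hab (by simp [swap_apply_def, hab.ne, hac.ne, hac.ne', hbc.ne', hbc])
  rw [hconj] at hstep
  exact .trans (bruhatLE_mul_swap hbc (by simp [swap_apply_def, hac.ne', hbc.ne', hac])) hstep

lemma swap_le_swap_of_lt_of_lt_right {a b c : Fin n} (hab : a < b) (hbc : b < c) :
    BruhatLE (swap b c) (swap a c) := by
  have hac := hab.trans hbc
  have hconj : swap b c * swap a b * swap b c = swap a c := by
    ext k
    simp only [Perm.mul_apply, swap_apply_def]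
    split_ifs <;> subst_vars <;> order
  have hstep : BruhatLE (swap b c * swap a b) (swap b c * swap a b * swap b c) :=
    bruhatLE_mul_swap hbc (by simp [swap_apply_def, hab.ne, hac.ne, hbc.ne', hac.ne', hab])
  rw [hconj] at hstep
  exact .trans (bruhatLE_mul_swap hab (by simp [swap_apply_def, hab.ne, hac.ne, hac])) hstep

lemma swap_le_swap_of_le_of_le {s j i r : Fin n} (hsj : s ≤ j) (hji : j < i) (hir : i ≤ r) :
    BruhatLE (swap i j) (swap r s) := by
  rw [swap_comm i j, swap_comm r s]
  have left : BruhatLE (swap j i) (swap s i) := by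
    rcases hsj.eq_or_lt with rfl | hsj
    · exact .refl
    · exact swap_le_swap_of_lt_of_lt_right hsj hji
  have right : BruhatLE (swap s i) (swap s r) := by
    rcases hir.eq_or_lt with rfl | hir
    · exact .refl
    · exact swap_le_swap_of_lt_of_lt_left (hsj.trans_lt hji) hir
  exact left.trans right

lemma Equiv.Perm.IsCycle.isSwap_of_sq_eq_one {α : Type*} [Fintype α] [DecidableEq α]
    {σ : Perm α} (hσ : σ.IsCycle) (h : σ ^ 2 = 1) : σ.IsSwap :=
  card_support_eq_two.1 (hσ.orderOf ▸ orderOf_eq_prime h hσ.ne_one)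

lemma Equiv.Perm.Disjoint.sq_eq_one {α : Type*} {σ τ : Perm α} (hστ : σ.Disjoint τ)
    (h : (σ * τ) ^ 2 = 1) : σ ^ 2 = 1 ∧ τ ^ 2 = 1 := by
  rw [hστ.commute.mul_pow] at h
  exact (hστ.pow_disjoint_pow 2 2).mul_eq_one_iff.1 h

lemma bruhatLE_mul_swap_of_apply_eq {x : Perm (Fin n)} {p q : Fin n} (hpq : p ≠ q)
    (hp : x p = p) (hq : x q = q) : BruhatLE x (x * swap p q) := by
  rcases hpq.lt_or_gt with hpq | hqp
  · exact bruhatLE_mul_swap hpq (by rwa [hp, hq])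
  · rw [swap_comm]
    exact bruhatLE_mul_swap hqp (by rwa [hp, hq])

lemma bruhatLE_mul_of_disjoint {x v : Perm (Fin n)} (hxv : x.Disjoint v) (hv : v ^ 2 = 1) :
    BruhatLE x (x * v) := by
  induction v using cycle_induction_on generalizing x with
  | base_one => simpa using .refl
  | base_cycles σ hσ =>
    obtain ⟨p, q, hpq, rfl⟩ := hσ.isSwap_of_sq_eq_one hv
    exact bruhatLE_mul_swap_of_apply_eq hpq
      ((hxv p).resolve_right (by simpa using hpq.symm)) ((hxv q).resolve_right (by simpa using hpq))
  | induction_disjoint σ τ hστ _ ihσ ihτ =>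
    obtain ⟨hσ2, hτ2⟩ := hστ.sq_eq_one hv
    have hxσ : x.Disjoint σ := fun a => (hxv a).imp_right fun h => (hστ.mul_apply_eq_iff.1 h).1
    have hxτ : x.Disjoint τ := fun a => (hxv a).imp_right fun h => (hστ.mul_apply_eq_iff.1 h).2
    rw [← mul_assoc]
    exact (ihσ hxσ hσ2).trans (ihτ (hxτ.mul_left hστ) hτ2)

lemma bruhatLE_swap_of_sq_eq_one {w : Perm (Fin n)} (hw : w ^ 2 = 1) {r s : Fin n}
    (hwr : w r = s) : BruhatLE (swap r s) w := by
  have hws : w s = r := by rw [← hwr, ← Perm.mul_apply, ← sq, hw, Perm.one_apply]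
  have hcomm : Commute (swap r s) w := by
    rw [Commute, SemiconjBy, mul_swap_eq_swap_mul, hwr, hws, swap_comm]
  have hdisj : (swap r s).Disjoint (swap r s * w) := by
    intro a
    rcases eq_or_ne a r with rfl | har
    · simp [hwr]
    rcases eq_or_ne a s with rfl | has
    · simp [hws]
    · exact .inl (swap_apply_of_ne_of_ne har has)
  have hv : (swap r s * w) ^ 2 = 1 := by rw [hcomm.mul_pow, sq, swap_mul_self, one_mul, hw]
  simpa using bruhatLE_mul_of_disjoint hdisj hv

/-- for an involution `w ∈ Sₙ` and a positive root `α = ε_j − ε_i` (`j < i`),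
the reflection `s_α = (i, j)` satisfies `s_α ≤ w` in the Bruhat order iff there is a root
`ε_s − ε_r` in the support of `w` (i.e. `s < r` and `w(r) = s`) with `s ≤ j` and `i ≤ r`. -/
theorem reflection_le_involution_iff
    (n : ℕ) (w : Equiv.Perm (Fin n)) (hw : w ^ 2 = 1)
    (i j : Fin n) (hji : j < i) :
    BruhatLE (Equiv.swap i j) w ↔ ∃ r s : Fin n, s < r ∧ w r = s ∧ s ≤ j ∧ i ≤ r := by
  constructor
  · intro h
    obtain ⟨a, haj, hia⟩ := h.exists_le_le_apply (i := i) ⟨j, le_rfl, by simp⟩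
    have hwa : w (w a) = a := by rw [← Perm.mul_apply, ← sq, hw, Perm.one_apply]
    exact ⟨w a, a, haj.trans_lt (hji.trans_le hia), hwa, haj, hia⟩
  · rintro ⟨r, s, hsr, hwr, hsj, hir⟩
    exact (swap_le_swap_of_le_of_le hsj hji hir).trans (bruhatLE_swap_of_sq_eq_one hw hwr)
end

section
/- Let w ∈ S_n be an involution with w(1) = j ≥ 3, u = s_{j−1}⋯s₁, v = u⁻¹w, and g₀ = s_{j−1}⋯s₂. Then v⁻¹ ≥ g₀ in the Bruhat order on S_n. -/
open Equiv Set

theorem Equiv.swap_lt_swap_of_covBy {α : Type*} [LinearOrder α] {a b x y : α} (hab : a ⋖ b)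
    (hxy : x < y) (hne : (x, y) ≠ (a, b)) : swap a b x < swap a b y := by
  simp only [swap_apply_def, ne_eq, Prod.mk.injEq] at hne ⊢
  have := hab.lt
  split_ifs <;> subst_vars <;> first
    | exact absurd ⟨rfl, rfl⟩ hne
    | order
    | (have := hab.ge_of_gt hxy; order)
    | (have := hab.le_of_lt hxy; order)

theorem invCount_mul_swap_lt {n : ℕ} (π : Perm (Fin n)) {a b : Fin n} (hab : a ⋖ b)
    (hdesc : π b < π a) : invCount (π * swap a b) < invCount π := by
  set s := swap a b
  set S := Finset.univ.filter fun p : Fin n × Fin n => p.1 < p.2 ∧ π p.2 < π p.1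
  have hmaps : ∀ p ∈ Finset.univ.filter
      (fun p : Fin n × Fin n => p.1 < p.2 ∧ (π * s) p.2 < (π * s) p.1),
      Prod.map s s p ∈ S.erase (a, b) := by
    rintro ⟨x, y⟩ hp
    obtain ⟨hxy, hinv⟩ := (Finset.mem_filter.1 hp).2
    simp only [Perm.mul_apply] at hinv
    have hne : (x, y) ≠ (a, b) := by
      rintro ⟨⟩
      simp only [s, swap_apply_left, swap_apply_right] at hinv
      exact hinv.asymm hdesc
    refine Finset.mem_erase.2 ⟨?_, by simpa [S] using ⟨swap_lt_swap_of_covBy hab hxy hne, hinv⟩⟩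
    simp only [Prod.map, ne_eq, Prod.mk.injEq, s, swap_apply_eq_iff, swap_apply_left,
      swap_apply_right]
    rintro ⟨rfl, rfl⟩
    exact hxy.asymm hab.lt
  calc invCount (π * s) ≤ (S.erase (a, b)).card :=
        Finset.card_le_card_of_injOn _ hmaps (s.injective.prodMap s.injective).injOn
    _ < S.card := Finset.card_erase_lt_of_mem (by simpa [S] using ⟨hab.lt, hdesc⟩)

theorem Equiv.Perm.eq_of_eqOn_Iio_of_strictMonoOn_Ici {α : Type*} [LinearOrder α]
    [WellFoundedLT α] {σ τ : Perm α} {k : α} (hlow : ∀ x < k, σ x = τ x)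
    (hσ : StrictMonoOn σ (Ici k)) (hτ : StrictMonoOn τ (Ici k)) : σ = τ := by
  by_contra hne
  obtain ⟨x, hx, hmin⟩ := wellFounded_lt.has_min {x | σ x ≠ τ x}
    (not_forall.1 (mt Perm.ext hne))
  have hkx : k ≤ x := not_lt.1 fun h => hx (hlow x h)
  wlog hlt : σ x < τ x generalizing σ τ
  · exact this (fun y hy => (hlow y hy).symm) hτ hσ (Ne.symm hne) (Ne.symm hx)
      (fun y hy => hmin y (Ne.symm hy)) (lt_of_le_of_ne (not_lt.1 hlt) (Ne.symm hx))
  -- the preimage `y` of `σ x` under `τ` can be neither below, at, nor above `x`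
  obtain ⟨y, hy⟩ := τ.surjective (σ x)
  rcases lt_trichotomy y x with hyx | rfl | hxy
  · have : σ y = τ y := not_not.1 fun h => hmin y h hyx
    exact hyx.ne (σ.injective (this.trans hy))
  · exact hx hy.symm
  · exact (hτ hkx (hkx.trans hxy.le) hxy).not_gt (hy ▸ hlt)

theorem bruhatLE_of_eqOn_Iio_of_strictMonoOn_Ici {n : ℕ} {k : Fin n} {ρ : Perm (Fin n)}
    (hρ : StrictMonoOn ρ (Ici k)) (π : Perm (Fin n)) (hlow : ∀ x < k, π x = ρ x) :
    BruhatLE ρ π := by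
  induction hN : invCount π using Nat.strong_induction_on generalizing π with
  | _ N ih =>
  by_cases hπ : StrictMonoOn π (Ici k)
  · rw [Perm.eq_of_eqOn_Iio_of_strictMonoOn_Ici hlow hπ hρ]
    exact .refl
  obtain ⟨a, ha, hka, -, hasc⟩ : ∃ a, ¬IsMax a ∧ a ∈ Ici k ∧ Order.succ a ∈ Ici k ∧
      ¬π a < π (Order.succ a) := by
    by_contra! h
    exact hπ (strictMonoOn_of_lt_succ ordConnected_Ici h)
  have hcov := Order.covBy_succ_of_not_isMax ha
  have hdesc : π (Order.succ a) < π a :=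
    (not_lt.1 hasc).lt_of_ne (π.injective.ne hcov.lt.ne')
  have hlt := invCount_mul_swap_lt π hcov hdesc
  refine .tail (ih _ (hN ▸ hlt) (π * swap a (Order.succ a)) (fun x hx => ?_) rfl)
    ⟨hlt, a, Order.succ a, by simp [mul_assoc]⟩
  have hxa : x < a := lt_of_lt_of_le hx hka
  rw [Perm.mul_apply, swap_apply_of_ne_of_ne hxa.ne (hxa.trans hcov.lt).ne, hlow x hx]

/-- `u = adjSwapProd n 0 (j - 1)` and `g₀ = adjSwapProd n 1 (j - 2)` hold definitionally. -/
def adjSwapProd (n s t : ℕ) (h : s + t < n) : Perm (Fin n) :=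
  ((List.finRange t).reverse.map fun m =>
    swap (⟨m.1 + s, by have := m.isLt; omega⟩ : Fin n)
      (⟨m.1 + s + 1, by have := m.isLt; omega⟩ : Fin n)).prod

theorem adjSwapProd_succ (n s t : ℕ) (h : s + (t + 1) < n) :
    adjSwapProd n s (t + 1) h =
      swap (⟨s + t, by omega⟩ : Fin n) ⟨s + t + 1, by omega⟩ * adjSwapProd n s t (by omega) := by
  rw [adjSwapProd, List.finRange_succ_last, List.reverse_append, List.map_append,
    List.prod_append]
  simp only [List.reverse_cons, List.reverse_nil, List.nil_append, List.map_cons, List.map_nil,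
    List.prod_cons, List.prod_nil, mul_one, List.map_reverse, List.map_map]
  congr 1
  · congr 1 <;> ext <;> simp [Nat.add_comm]
  · rw [adjSwapProd, List.map_reverse]; rfl

theorem adjSwapProd_apply_val (n s t : ℕ) (h : s + t < n) (x : Fin n) :
    (adjSwapProd n s t h x).val =
      if x.val = s then s + t else if s < x.val ∧ x.val ≤ s + t then x.val - 1
      else x.val := by
  induction t with
  | zero =>
    simp only [adjSwapProd, List.finRange_zero, List.reverse_nil, List.map_nil, List.prod_nil,
      Perm.one_apply]
    split_ifs <;> omega
  | succ t ih =>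
    rw [adjSwapProd_succ, Perm.mul_apply, swap_apply_def]
    have := ih (by omega)
    generalize adjSwapProd n s t _ x = y at this ⊢
    simp only [Fin.ext_iff, apply_ite Fin.val] at this ⊢
    split_ifs at this ⊢ <;> omega

theorem adjSwapProd_strictMonoOn (n s t : ℕ) (h : s + t < n) :
    StrictMonoOn (adjSwapProd n s t h) {x | s < x.val} := by
  intro x hx y hy hxy
  simp only [mem_ofPred_eq, Fin.lt_def, adjSwapProd_apply_val] at hx hy hxy ⊢
  split_ifs <;> omega

/-- let `w ∈ Sₙ` be an involution with `w(1) = j ≥ 3`, `u = s_{j−1}⋯s₁`,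
`v = u⁻¹w` and `g₀ = s_{j−1}⋯s₂`.  Then `v⁻¹ ≥ g₀` in the Bruhat order.
(Points are 0-indexed: the letter `k` is `⟨k−1,_⟩ : Fin n`.) -/
theorem g0_le_v_inv_in_bruhat
    (n j : ℕ) (hj : 3 ≤ j) (hjn : j ≤ n)
    (w : Equiv.Perm (Fin n)) (hw : w ^ 2 = 1)
    (hw1 : w ⟨0, by omega⟩ = ⟨j - 1, by omega⟩) :
    let u : Equiv.Perm (Fin n) :=
      ((List.finRange (j - 1)).reverse.map fun m =>
        Equiv.swap (⟨m.1, by have := m.isLt; omega⟩ : Fin n)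
                   (⟨m.1 + 1, by have := m.isLt; omega⟩ : Fin n)).prod
    let g₀ : Equiv.Perm (Fin n) :=
      ((List.finRange (j - 2)).reverse.map fun m =>
        Equiv.swap (⟨m.1 + 1, by have := m.isLt; omega⟩ : Fin n)
                   (⟨m.1 + 2, by have := m.isLt; omega⟩ : Fin n)).prod
    let v : Equiv.Perm (Fin n) := u⁻¹ * w
    BruhatLE g₀ v⁻¹ := by
  intro u g₀ v
  have hu (x : Fin n) : (u x).val = _ := adjSwapProd_apply_val n 0 (j - 1) (by omega) x
  have hg (x : Fin n) : (g₀ x).val = _ := adjSwapProd_apply_val n 1 (j - 2) (by omega) x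
  have hv : v⁻¹ = w * u := by
    rw [mul_inv_rev, inv_inv, inv_eq_of_mul_eq_one_right (by rw [← sq, hw])]
  have hwj : w ⟨j - 1, by omega⟩ = ⟨0, by omega⟩ := by
    rw [← hw1, ← Perm.mul_apply, ← sq, hw, Perm.one_apply]
  refine bruhatLE_of_eqOn_Iio_of_strictMonoOn_Ici (k := ⟨2, by omega⟩) ?_ v⁻¹ ?_
  · exact (adjSwapProd_strictMonoOn n 1 (j - 2) (by omega)).mono fun x hx => hx
  · intro x hx
    obtain rfl | rfl : x = ⟨0, by clear x hx; omega⟩ ∨ x = ⟨1, by clear x hx; omega⟩ := by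
      simp only [Fin.lt_def, Fin.ext_iff] at hx ⊢; omega
    · have hu0 : u ⟨0, by omega⟩ = ⟨j - 1, by omega⟩ := Fin.ext <| by
        rw [hu, if_pos rfl]; dsimp only; omega
      rw [hv, Perm.mul_apply, hu0, hwj]
      exact Fin.ext <| by rw [hg, if_neg (by simp), if_neg (by simp)]
    · have hu1 : u ⟨1, by omega⟩ = ⟨0, by omega⟩ := Fin.ext <| by
        rw [hu, if_neg (by simp), if_pos (by dsimp only; omega)]; rfl
      rw [hv, Perm.mul_apply, hu1, hw1]
      exact Fin.ext <| by rw [hg, if_pos rfl]; dsimp only; omega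
end

section
/- Let v, w be involutions in S_n and let R_w^* denote the strictly lower-triangular part of the rank matrix R_w (i.e., (R_w^*)_{i,j} = (R_w)_{i,j} for i > j and 0 otherwise). Then v ≤ w in the Bruhat order if and only if (R_v^*)_{i,j} ≤ (R_w^*)_{i,j} for all i, j. -/
/-- The rank matrix: `(R_w)_{i,j} = #{k ≤ j : w(k) ≥ i}`. -/
def rankM {n : ℕ} (w : Equiv.Perm (Fin n)) (i j : Fin n) : ℕ :=
  (Finset.univ.filter fun k : Fin n => k ≤ j ∧ i ≤ w k).card

/-- The strictly lower-triangular part of the rank matrix. -/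
def rankMStar {n : ℕ} (w : Equiv.Perm (Fin n)) (i j : Fin n) : ℕ :=
  if j < i then rankM w i j else 0

/-!
Two facts combine. First, the rank-matrix criterion for the Bruhat order on all of `Sₙ`:
`v ≤ w` iff `R_v ≤ R_w` entrywise. Multiplying `w` on the right by a transposition `(a b)` with
`a < b` and `w a < w b` raises the inversion count and adds `1` to `R_w` exactly on the rectangle
`a ≤ j < b`, `w a < i ≤ w b`. Conversely, if `R_v ≤ R_w` and `v ≠ w`, let `d` be the first
position where `v` and `w` differ (then `v d < w d`) and `e > d` the first position with
`v d < v e ≤ w d`; then `v (d e)` lies above `v` and still has `R_{v (d e)} ≤ R_w`.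

Second, an involution `u` maps `{k ≤ j : i ≤ u k}` onto `{k ≥ i : u k ≤ j}`, which gives
`R_u(i, j) + #{k > j} = #{k ≥ i} + R_u(j + 1, i - 1)`: on and above the diagonal, `R_u` is
determined by its strictly lower-triangular part.
-/

open Equiv Finset

theorem Equiv.Perm.involutive_of_sq_eq_one {α : Type*} {u : Perm α} (hu : u ^ 2 = 1) :
    Function.Involutive u :=
  fun x => by rw [← Perm.mul_apply, ← sq, hu, Perm.one_apply]

section
variable {n : ℕ}

theorem rankM_eq_sum (w : Perm (Fin n)) (i j : Fin n) :
    rankM w i j = ∑ k, if k ≤ j ∧ i ≤ w k then 1 else 0 :=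
  card_filter _ _

theorem swap_lt_swap_of_inversion {w : Perm (Fin n)} {a b p q : Fin n} (hab : a < b)
    (hw : w a < w b) (hpq : p < q) (hinv : w q < w p) (h : w (swap a b p) ≤ w (swap a b q)) :
    swap a b p < swap a b q := by
  simp only [swap_apply_def] at *
  split_ifs at * <;> subst_vars <;> order

theorem invCount_lt_invCount_mul_swap_s12 {w : Perm (Fin n)} {a b : Fin n} (hab : a < b)
    (hw : w a < w b) : invCount w < invCount (w * swap a b) := by
  set s := univ.filter fun p : Fin n × Fin n => p.1 < p.2 ∧ w p.2 < w p.1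
  set t := univ.filter fun p : Fin n × Fin n =>
    p.1 < p.2 ∧ (w * swap a b) p.2 < (w * swap a b) p.1
  change #s < #t
  have hab_mem : (a, b) ∈ t \ s := by
    simp only [s, t, mem_sdiff, mem_filter, mem_univ, true_and]
    simp only [Perm.mul_apply, swap_apply_left, swap_apply_right]
    exact ⟨⟨hab, hw⟩, fun h => h.2.not_gt hw⟩
  -- `(a b)` sends an inversion of `w` that `w * (a b)` loses to one it gains; `(a, b)` is gained.
  rw [← card_sdiff_lt_card_sdiff_iff]
  calc #(s \ t) ≤ #((t \ s).erase (a, b)) := by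
        refine card_le_card_of_injOn ((swap a b).prodCongr (swap a b)) ?_
          ((swap a b).prodCongr (swap a b)).injective.injOn
        rintro ⟨p, q⟩ hpq
        simp only [s, t, mem_coe, mem_sdiff, mem_erase, mem_filter, mem_univ, true_and] at hpq ⊢
        simp only [Perm.mul_apply, prodCongr_apply, Prod.map, swap_apply_self, not_and, ne_eq,
          Prod.mk.injEq] at hpq ⊢
        obtain ⟨⟨hpq, hinv⟩, hnot⟩ := hpq
        refine ⟨fun hpa hqb => ?_, ⟨swap_lt_swap_of_inversion hab hw hpq hinv
          (not_lt.1 (hnot hpq)), hinv⟩, fun _ => hnot hpq⟩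
        rw [swap_apply_eq_iff, swap_apply_left] at hpa
        rw [swap_apply_eq_iff, swap_apply_right] at hqb
        subst hpa hqb
        exact hpq.not_gt hab
    _ < #(t \ s) := card_erase_lt_of_mem hab_mem

theorem rankM_mul_swap_add (w : Perm (Fin n)) {a b : Fin n} (hab : a < b) (i j : Fin n) :
    rankM (w * swap a b) i j + (if a ≤ j ∧ j < b ∧ i ≤ w a then 1 else 0) =
      rankM w i j + (if a ≤ j ∧ j < b ∧ i ≤ w b then 1 else 0) := by
  have hσ : ∑ k, (if k ≤ j ∧ i ≤ (w * swap a b) k then 1 else 0) =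
      ∑ k, if swap a b k ≤ j ∧ i ≤ w k then 1 else 0 := by
    rw [← Equiv.sum_comp (swap a b)]
    simp only [Perm.mul_apply, swap_apply_self]
  rw [rankM_eq_sum, rankM_eq_sum, hσ,
    ← Fintype.sum_ite_eq a (fun k => if a ≤ j ∧ j < b ∧ i ≤ w k then 1 else 0),
    ← Fintype.sum_ite_eq b (fun k => if a ≤ j ∧ j < b ∧ i ≤ w k then 1 else 0),
    ← sum_add_distrib, ← sum_add_distrib]
  refine sum_congr rfl fun k _ => ?_
  simp only [swap_apply_def]
  split_ifs <;> omega

theorem rankM_le_rankM_mul_swap {w : Perm (Fin n)} {a b : Fin n} (hab : a < b) (hw : w a < w b)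
    (i j : Fin n) : rankM w i j ≤ rankM (w * swap a b) i j := by
  have := rankM_mul_swap_add w hab i j
  split_ifs at this <;> omega

theorem sum_rankM_lt_sum_rankM_mul_swap {w : Perm (Fin n)} {a b : Fin n} (hab : a < b)
    (hw : w a < w b) :
    ∑ p : Fin n × Fin n, rankM w p.1 p.2 < ∑ p : Fin n × Fin n, rankM (w * swap a b) p.1 p.2 := by
  refine sum_lt_sum (fun p _ => rankM_le_rankM_mul_swap hab hw p.1 p.2) ⟨(w b, a), mem_univ _, ?_⟩
  have := rankM_mul_swap_add w hab (w b) a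
  dsimp only
  rw [if_neg (by order), if_pos ⟨le_rfl, hab, le_rfl⟩] at this
  omega

theorem rankM_le_rankM_mul_swap_of_invCount_lt {x : Perm (Fin n)} {p q : Fin n}
    (h : invCount x < invCount (x * swap p q)) (i j : Fin n) :
    rankM x i j ≤ rankM (x * swap p q) i j := by
  wlog hpq : p < q generalizing p q
  · rcases (not_lt.1 hpq).lt_or_eq with hqp | rfl
    · rw [swap_comm] at h ⊢
      exact this h hqp
    · simp [swap_self, ← Perm.one_def] at h
  refine rankM_le_rankM_mul_swap hpq (lt_of_not_ge fun hqp => ?_) i j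
  have hy : (x * swap p q) p < (x * swap p q) q := by
    simpa using hqp.lt_of_ne (x.injective.ne hpq.ne')
  have := invCount_lt_invCount_mul_swap_s12 hpq hy
  rw [mul_swap_mul_self] at this
  omega

theorem rankM_le_of_bruhatLE {v w : Perm (Fin n)} (h : BruhatLE v w) (i j : Fin n) :
    rankM v i j ≤ rankM w i j := by
  induction h with
  | refl => rfl
  | tail _ hstep ih =>
    obtain ⟨hlt, p, q, rfl⟩ := hstep
    exact ih.trans (rankM_le_rankM_mul_swap_of_invCount_lt hlt i j)

theorem sum_ite_gt_le_of_rankM_le {v w : Perm (Fin n)}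
    (hle : ∀ i j, rankM v i j ≤ rankM w i j) (x j : Fin n) :
    ∑ k, (if k ≤ j ∧ x < v k then 1 else 0) ≤ ∑ k, if k ≤ j ∧ x < w k then 1 else 0 := by
  by_cases hx : x.val + 1 < n
  · have hsucc : ∀ y : Fin n, (⟨x.val + 1, hx⟩ : Fin n) ≤ y ↔ x < y := fun y => by
      rw [Fin.le_def, Fin.lt_def]
      exact Nat.add_one_le_iff
    simpa only [rankM_eq_sum, hsucc] using hle ⟨x.val + 1, hx⟩ j
  · have hlast : ∀ y : Fin n, ¬ x < y := fun y => by omega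
    simp only [hlast, and_false, if_false, sum_const_zero, le_refl]

theorem lt_of_rankM_le_of_eqOn_lt {v w : Perm (Fin n)} (hle : ∀ i j, rankM v i j ≤ rankM w i j)
    {d : Fin n} (heq : ∀ k < d, v k = w k) (hne : v d ≠ w d) : v d < w d := by
  refine (le_of_not_gt fun hwv => (hle (v d) d).not_gt ?_).lt_of_ne hne
  rw [rankM_eq_sum, rankM_eq_sum]
  refine sum_lt_sum (fun k _ => ?_) ⟨d, mem_univ _, ?_⟩
  · rcases lt_trichotomy k d with hk | rfl | hk
    · rw [heq k hk]
    · split_ifs <;> omega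
    · split_ifs <;> omega
  · split_ifs <;> omega

theorem rankM_lt_rankM_of_gap {v w : Perm (Fin n)} (hle : ∀ i j, rankM v i j ≤ rankM w i j)
    {d i j : Fin n} (heq : ∀ k < d, v k = w k) (hvi : v d < i) (hiw : i ≤ w d) (hdj : d ≤ j)
    (hgap : ∀ k, d < k → k ≤ j → v k ≤ v d ∨ w d < v k) :
    rankM v i j < rankM w i j := by
  -- By `hgap`, the conditions `i ≤ v k` and `w d < v k` agree for `d < k ≤ j`.
  have hthr := sum_ite_gt_le_of_rankM_le hle (w d) j
  have key : ∑ k, ((if k ≤ j ∧ i ≤ v k then 1 else 0) + if k ≤ j ∧ w d < w k then 1 else 0) <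
      ∑ k, ((if k ≤ j ∧ i ≤ w k then 1 else 0) + if k ≤ j ∧ w d < v k then 1 else 0) := by
    refine sum_lt_sum (fun k _ => ?_) ⟨d, mem_univ _, ?_⟩
    · rcases lt_trichotomy k d with hk | rfl | hk
      · rw [heq k hk]
      · split_ifs <;> omega
      · by_cases hkj : k ≤ j
        · have := hgap k hk hkj
          split_ifs <;> omega
        · simp only [hkj, false_and, if_false, le_refl]
    · split_ifs <;> omega
  rw [sum_add_distrib, sum_add_distrib] at key
  rw [rankM_eq_sum, rankM_eq_sum]
  omega

theorem exists_mul_swap_rankM_le {v w : Perm (Fin n)} (hle : ∀ i j, rankM v i j ≤ rankM w i j)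
    (hne : v ≠ w) :
    ∃ a b, a < b ∧ v a < v b ∧ ∀ i j, rankM (v * swap a b) i j ≤ rankM w i j := by
  obtain ⟨d, hd⟩ := exists_minimal_of_wellFoundedLT (fun k => v k ≠ w k)
    (not_forall_not.1 fun h => hne (Equiv.ext fun k => not_not.1 (h k)))
  have heq : ∀ k < d, v k = w k := fun k hk => not_not.1 (hd.not_prop_of_lt hk)
  have hdw : v d < w d := lt_of_rankM_le_of_eqOn_lt hle heq hd.prop
  have hcand : d < v.symm (w d) := by
    have hvk : v (v.symm (w d)) = w d := v.apply_symm_apply _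
    refine lt_of_le_of_ne (le_of_not_gt fun hkd => ?_) fun hdk =>
      hd.prop (by simpa [← hdk] using hvk)
    exact hkd.ne (w.injective ((heq _ hkd).symm.trans hvk))
  obtain ⟨e, he⟩ := exists_minimal_of_wellFoundedLT (fun k => d < k ∧ v d < v k ∧ v k ≤ w d)
    ⟨v.symm (w d), hcand, by simpa using hdw, by simp⟩
  obtain ⟨hde, hve, hew⟩ := he.prop
  refine ⟨d, e, hde, hve, fun i j => ?_⟩
  have hswap := rankM_mul_swap_add v hde i j
  by_cases hrect : d ≤ j ∧ j < e ∧ v d < i ∧ i ≤ v e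
  · obtain ⟨hdj, hje, hvi, hie⟩ := hrect
    have := rankM_lt_rankM_of_gap hle heq hvi (hie.trans hew) hdj fun k hdk hkj => by
      have := he.not_prop_of_lt (lt_of_le_of_lt hkj hje)
      simp only [hdk, true_and, not_and, not_le] at this
      by_cases hvk : v d < v k
      · exact .inr (this hvk)
      · exact .inl (not_lt.1 hvk)
    split_ifs at hswap <;> omega
  · have := hle i j
    split_ifs at hswap <;> omega

theorem bruhatLE_of_rankM_le {v w : Perm (Fin n)} (hle : ∀ i j, rankM v i j ≤ rankM w i j) :
    BruhatLE v w := by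
  by_cases hvw : v = w
  · exact hvw ▸ .refl
  obtain ⟨a, b, hab, hv, hle'⟩ := exists_mul_swap_rankM_le hle hvw
  have hlt := sum_rankM_lt_sum_rankM_mul_swap hab hv
  have hbound : ∑ p : Fin n × Fin n, rankM (v * swap a b) p.1 p.2 ≤
      ∑ p : Fin n × Fin n, rankM w p.1 p.2 := sum_le_sum fun p _ => hle' p.1 p.2
  exact .head ⟨invCount_lt_invCount_mul_swap_s12 hab hv, a, b, rfl⟩ (bruhatLE_of_rankM_le hle')
termination_by ∑ p : Fin n × Fin n, rankM w p.1 p.2 - ∑ p : Fin n × Fin n, rankM v p.1 p.2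
decreasing_by omega

theorem rankM_add_sum_eq_of_involutive {u : Perm (Fin n)} (hu : Function.Involutive u)
    (i j : Fin n) :
    rankM u i j + ∑ k, (if j < k then 1 else 0) =
      ∑ k, (if i ≤ k then 1 else 0) + ∑ k, if k < i ∧ j < u k then 1 else 0 := by
  rw [rankM_eq_sum, ← Equiv.sum_comp u, ← Equiv.sum_comp u (fun k => if j < k then 1 else 0),
    ← sum_add_distrib, ← sum_add_distrib]
  refine sum_congr rfl fun k _ => ?_
  rw [hu k]
  split_ifs <;> omega

theorem sum_ite_lower_le_of_rankMStar_le {v w : Perm (Fin n)}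
    (h : ∀ i j, rankMStar v i j ≤ rankMStar w i j) {i j : Fin n} (hij : i ≤ j) :
    ∑ k, (if k < i ∧ j < v k then 1 else 0) ≤ ∑ k, if k < i ∧ j < w k then 1 else 0 := by
  by_cases hedge : i.val = 0 ∨ j.val + 1 = n
  · have hzero : ∀ k, ¬ (k < i ∧ j < v k) := fun k => by omega
    simp only [hzero, if_false, sum_const_zero, zero_le]
  · have hj : j.val + 1 < n := by omega
    have hi : i.val - 1 < n := by omega
    have hlower : (⟨i.val - 1, hi⟩ : Fin n) < ⟨j.val + 1, hj⟩ := by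
      rw [Fin.mk_lt_mk]
      omega
    have hshift : ∀ k y : Fin n, (k ≤ ⟨i.val - 1, hi⟩ ∧ ⟨j.val + 1, hj⟩ ≤ y) ↔ (k < i ∧ j < y) :=
      fun k y => by
        simp only [Fin.le_def, Fin.lt_def]
        omega
    have := h ⟨j.val + 1, hj⟩ ⟨i.val - 1, hi⟩
    simpa only [rankMStar, if_pos hlower, rankM_eq_sum, hshift] using this

theorem rankM_le_of_rankMStar_le {v w : Perm (Fin n)} (hv : Function.Involutive v)
    (hw : Function.Involutive w) (h : ∀ i j, rankMStar v i j ≤ rankMStar w i j) (i j : Fin n) :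
    rankM v i j ≤ rankM w i j := by
  rcases lt_or_ge j i with hji | hij
  · simpa only [rankMStar, if_pos hji] using h i j
  · have := rankM_add_sum_eq_of_involutive hv i j
    have := rankM_add_sum_eq_of_involutive hw i j
    have := sum_ite_lower_le_of_rankMStar_le h hij
    omega

end

/-- for involutions `v, w ∈ Sₙ`, `v ≤ w` in the Bruhat order iff
`(R_v^*)_{i,j} ≤ (R_w^*)_{i,j}` for all `i, j`. -/
theorem bruhat_on_involutions_iff_lower_rank_matrix_le
    (n : ℕ) (v w : Equiv.Perm (Fin n)) (hv : v ^ 2 = 1) (hw : w ^ 2 = 1) :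
    BruhatLE v w ↔ ∀ i j : Fin n, rankMStar v i j ≤ rankMStar w i j := by
  refine ⟨fun h i j => ?_, fun h => bruhatLE_of_rankM_le <| rankM_le_of_rankMStar_le
    (Perm.involutive_of_sq_eq_one hv) (Perm.involutive_of_sq_eq_one hw) h⟩
  unfold rankMStar
  split_ifs
  exacts [rankM_le_of_bruhatLE h i j, le_rfl]
end

section
/- Let W be a Coxeter group with length function ℓ, and for each w ∈ W fix a reduced expression w = s_{i₁}⋯s_{i_l}. In the nil-Hecke ring (the free module over the field of rational funcions ℂ(𝔥) with basis {δ_v : v ∈ W} and multiplication fδ_v · gδ_w = f·v(g) δ_{vw}), set x_i = α_i⁻¹(δ_{s_i} − δ_{id}) and x_w = x_{i₁}⋯x_{i_l}. Then for v, w ∈ W: x_v · x_w = x_{vw} if ℓ(vw) = ℓ(v) + ℓ(w), and x_v · x_w = 0 otherwise. -/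
open CoxeterSystem

variable {B W K : Type*} [Group W] [Field K] [MulSemiringAction W K]

/-- The multiplication of the nil-Hecke ring: the free `K`-module on basis `{δ_w : w ∈ W}`
(`K` playing the role of `ℂ(𝔥)`, acted on by `W`) with `f δ_v · g δ_w = f·v(g)·δ_{vw}`. -/
noncomputable def nhMul (a b : W →₀ K) : W →₀ K :=
  a.sum fun v f => b.sum fun w g => Finsupp.single (v * w) (f * (v • g))

/-- The basis element `δ_w` of the nil-Hecke ring. -/
noncomputable def nhDelta (w : W) : W →₀ K := Finsupp.single w 1

/-- The element `x_i = α_i⁻¹ (δ_{s_i} − δ_{id})` of the nil-Hecke ring, where `α : B → K`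
records the simple roots (as elements of the field `K = ℂ(𝔥)`). -/
noncomputable def nhX {M : CoxeterMatrix B} (cs : CoxeterSystem M W) (α : B → K) (i : B) :
    W →₀ K :=
  (α i)⁻¹ • (nhDelta (cs.simple i) - nhDelta 1)

/-- `x_ω = x_{i₁} ⋯ x_{i_l}` for a word `ω = (i₁, …, i_l)`. -/
noncomputable def nhXWord {M : CoxeterMatrix B} (cs : CoxeterSystem M W) (α : B → K)
    (ω : List B) : W →₀ K :=
  (ω.map (nhX cs α)).foldr nhMul (nhDelta 1)

/-! Transported to Mathlib's skew monoid algebra `K[W]`, `nhMul` is associative, so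
`x_{ω₁} x_{ω₂} = x_{ω₁ ++ ω₂}`. If `ℓ(vw) = ℓ(v) + ℓ(w)` the concatenation is a reduced word
for `vw`. Otherwise it is not reduced, and the product over a non-reduced word vanishes: at the
first letter `i` that spoils reducedness, the prefix before it represents an element with right
descent `i`, hence has a reduced word ending in `i`, and `x_i² = 0` because `s_i(α_i) = -α_i`. -/

namespace CoxeterSystem

variable {M : CoxeterMatrix B} (cs : CoxeterSystem M W)

theorem isReduced_singleton (i : B) : cs.IsReduced [i] := by
  rw [IsReduced, wordProd_singleton, length_simple, List.length_singleton]

variable {cs}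

theorem IsReduced.isReduced_append_iff {ω₁ ω₂ : List B} (h₁ : cs.IsReduced ω₁)
    (h₂ : cs.IsReduced ω₂) :
    cs.IsReduced (ω₁ ++ ω₂) ↔
      cs.length (cs.wordProd ω₁ * cs.wordProd ω₂) =
        cs.length (cs.wordProd ω₁) + cs.length (cs.wordProd ω₂) := by
  rw [IsReduced, wordProd_append, List.length_append, h₁.eq, h₂.eq]

theorem IsReduced.isReduced_append_singleton_iff {ω : List B} (hω : cs.IsReduced ω) (i : B) :
    cs.IsReduced (ω ++ [i]) ↔ ¬cs.IsRightDescent (cs.wordProd ω) i := by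
  rw [hω.isReduced_append_iff (cs.isReduced_singleton i), wordProd_singleton, length_simple,
    not_isRightDescent_iff]

theorem IsRightDescent.exists_isReduced_append_singleton {w : W} {i : B}
    (h : cs.IsRightDescent w i) :
    ∃ ω : List B, cs.IsReduced (ω ++ [i]) ∧ cs.wordProd (ω ++ [i]) = w := by
  obtain ⟨ω, hω, hωw⟩ := cs.exists_isReduced (w * cs.simple i)
  have hprod : cs.wordProd (ω ++ [i]) = w := by
    rw [wordProd_append, wordProd_singleton, ← hωw, simple_mul_simple_cancel_right]
  refine ⟨ω, ?_, hprod⟩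
  rwa [hω.isReduced_append_singleton_iff, ← hωw, ← isRightDescent_iff_not_isRightDescent_mul]

end CoxeterSystem

open SkewMonoidAlgebra

theorem ofCoeff_nhMul (a b : W →₀ K) :
    (⟨nhMul a b⟩ : SkewMonoidAlgebra K W) = ⟨a⟩ * ⟨b⟩ := by
  apply coeff_injective
  simp only [mul_def, coeff_sum', coeff_single]
  rfl

theorem nhMul_assoc (a b c : W →₀ K) : nhMul (nhMul a b) c = nhMul a (nhMul b c) :=
  ofCoeff_injective <| by simp only [ofCoeff_nhMul, mul_assoc]

theorem zero_nhMul (a : W →₀ K) : nhMul 0 a = 0 :=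
  ofCoeff_injective <| by rw [ofCoeff_nhMul, ofCoeff_zero, zero_mul]

theorem nhMul_zero (a : W →₀ K) : nhMul a 0 = 0 :=
  ofCoeff_injective <| by rw [ofCoeff_nhMul, ofCoeff_zero, mul_zero]

theorem nhMul_nhDelta_one (a : W →₀ K) : nhMul a (nhDelta 1) = a :=
  ofCoeff_injective <| by rw [ofCoeff_nhMul, nhDelta, ofCoeff_one, mul_one]

section NilHeckeWords

variable {M : CoxeterMatrix B} (cs : CoxeterSystem M W) (α : B → K)

theorem ofCoeff_nhXWord (ω : List B) :
    (⟨nhXWord cs α ω⟩ : SkewMonoidAlgebra K W) = (ω.map fun i => ⟨nhX cs α i⟩).prod := by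
  induction ω with
  | nil => rfl
  | cons i ω ih => rw [List.map_cons, List.prod_cons, ← ih, ← ofCoeff_nhMul]; rfl

theorem nhXWord_append (ω₁ ω₂ : List B) :
    nhXWord cs α (ω₁ ++ ω₂) = nhMul (nhXWord cs α ω₁) (nhXWord cs α ω₂) := by
  apply ofCoeff_injective
  rw [ofCoeff_nhMul, ofCoeff_nhXWord, ofCoeff_nhXWord, ofCoeff_nhXWord, List.map_append,
    List.prod_append]

theorem nhXWord_append_singleton (ω : List B) (i : B) :
    nhXWord cs α (ω ++ [i]) = nhMul (nhXWord cs α ω) (nhX cs α i) := by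
  rw [nhXWord_append]
  congr 1
  exact nhMul_nhDelta_one _

theorem nhX_mul_nhX_self {i : B} (hs : cs.simple i • α i = -α i) :
    nhMul (nhX cs α i) (nhX cs α i) = 0 := by
  set c := (α i)⁻¹
  have hc : cs.simple i • c = -c := by rw [smul_inv'', hs, inv_neg]
  have hX : (⟨nhX cs α i⟩ : SkewMonoidAlgebra K W) = single (cs.simple i) c - single 1 c := by
    rw [nhX, nhDelta, nhDelta, ofCoeff_smul, ofCoeff_sub, ofCoeff_single, ofCoeff_single,
      smul_sub, smul_single, smul_single, smul_eq_mul, mul_one]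
  apply ofCoeff_injective
  rw [ofCoeff_nhMul, hX, ofCoeff_zero]
  simp only [sub_mul, mul_sub, single_mul_single, hc, simple_mul_simple_self, one_smul,
    one_mul, mul_one, mul_neg, single_neg]
  abel

theorem nhXWord_eq_zero_of_not_isReduced (hs : ∀ i : B, cs.simple i • α i = -α i)
    (hX : ∀ ω ω' : List B, cs.IsReduced ω → cs.IsReduced ω' →
      cs.wordProd ω = cs.wordProd ω' → nhXWord cs α ω = nhXWord cs α ω')
    {ω : List B} (hω : ¬cs.IsReduced ω) : nhXWord cs α ω = 0 := by
  induction ω using List.reverseRecOn with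
  | nil => exact absurd (by simp [CoxeterSystem.IsReduced]) hω
  | append_singleton ω i ih =>
    rw [nhXWord_append_singleton]
    by_cases hred : cs.IsReduced ω
    · have hdesc : cs.IsRightDescent (cs.wordProd ω) i := by
        rwa [hred.isReduced_append_singleton_iff, not_not] at hω
      obtain ⟨ω', hred', hprod⟩ := hdesc.exists_isReduced_append_singleton
      rw [hX ω (ω' ++ [i]) hred hred' hprod.symm, nhXWord_append_singleton, nhMul_assoc,
        nhX_mul_nhX_self cs α (hs i), nhMul_zero]
    · rw [ih hred, zero_nhMul]

end NilHeckeWords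

theorem nhX_mul_nhX_general {M : CoxeterMatrix B} (cs : CoxeterSystem M W)
    (α : B → K)
    (hs : ∀ i : B, cs.simple i • α i = - α i)
    (hX : ∀ ω ω' : List B, cs.IsReduced ω → cs.IsReduced ω' →
      cs.wordProd ω = cs.wordProd ω' → nhXWord cs α ω = nhXWord cs α ω')
    (v w : W) (ω₁ ω₂ : List B)
    (h₁ : cs.IsReduced ω₁) (hp₁ : cs.wordProd ω₁ = v)
    (h₂ : cs.IsReduced ω₂) (hp₂ : cs.wordProd ω₂ = w) :
    (cs.length (v * w) = cs.length v + cs.length w →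
      ∀ ω₃ : List B, cs.IsReduced ω₃ → cs.wordProd ω₃ = v * w →
        nhMul (nhXWord cs α ω₁) (nhXWord cs α ω₂) = nhXWord cs α ω₃) ∧
    (cs.length (v * w) ≠ cs.length v + cs.length w →
      nhMul (nhXWord cs α ω₁) (nhXWord cs α ω₂) = 0) := by
  subst hp₁ hp₂
  rw [← nhXWord_append]
  refine ⟨fun hlen ω₃ h₃ hp₃ => ?_, fun hne => ?_⟩
  · refine hX _ _ ((h₁.isReduced_append_iff h₂).2 hlen) h₃ ?_
    rw [wordProd_append, hp₃]
  · exact nhXWord_eq_zero_of_not_isReduced cs α hs hX (mt (h₁.isReduced_append_iff h₂).1 hne)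

/-- in the nil-Hecke ring, with `x_w` defined via any reduced expression of `w`
(independence of the reduced expression, a theorem of Kostant–Kumar, is hypothesis `hX`),
one has `x_v · x_w = x_{vw}` if `ℓ(vw) = ℓ(v) + ℓ(w)`, and `x_v · x_w = 0` otherwise. -/
theorem nhX_mul_nhX {M : CoxeterMatrix B} (cs : CoxeterSystem M W)
    (α : B → K) (hα : ∀ i, α i ≠ 0)
    (hs : ∀ i : B, cs.simple i • α i = - α i)
    (hX : ∀ ω ω' : List B, cs.IsReduced ω → cs.IsReduced ω' →
      cs.wordProd ω = cs.wordProd ω' → nhXWord cs α ω = nhXWord cs α ω')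
    (v w : W) (ω₁ ω₂ : List B)
    (h₁ : cs.IsReduced ω₁) (hp₁ : cs.wordProd ω₁ = v)
    (h₂ : cs.IsReduced ω₂) (hp₂ : cs.wordProd ω₂ = w) :
    (cs.length (v * w) = cs.length v + cs.length w →
      ∀ ω₃ : List B, cs.IsReduced ω₃ → cs.wordProd ω₃ = v * w →
        nhMul (nhXWord cs α ω₁) (nhXWord cs α ω₂) = nhXWord cs α ω₃) ∧
    (cs.length (v * w) ≠ cs.length v + cs.length w →
      nhMul (nhXWord cs α ω₁) (nhXWord cs α ω₂) = 0) :=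
  nhX_mul_nhX_general cs α hs hX v w ω₁ ω₂ h₁ hp₁ h₂ hp₂
end

section
/- Let W be a Weyl group acting on ℂ(𝔥) and define c_w = c_{w,id} = (−1)^{ℓ(w)} Σ (s_{i₁}^{ε₁}α_{i₁})⁻¹ (s_{i₁}^{ε₁}s_{i₂}^{ε₂}α_{i₂})⁻¹ ⋯ (s_{i₁}^{ε₁}⋯s_{i_l}^{ε_l}α_{i_l})⁻¹, the sum over all ε ∈ {0,1}^l with s_{i₁}^{ε₁}⋯s_{i_l}^{ε_l} = id, where s_{i₁}⋯s_{i_l} is a reduced expression of w. Then c_w = c_{w⁻¹}. -/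
open CoxeterSystem
open scoped Classical

variable {B W K : Type*} [Group W] [Field K] [MulSemiringAction W K]

/-- For a word `ω` and a mask `ε ∈ {0,1}^|ω|`, the product `s_{i₁}^{ε₁} ⋯ s_{i_k}^{ε_k}`
of the first `k` masked letters. -/
def maskProdTake {M : CoxeterMatrix B} (cs : CoxeterSystem M W)
    (ω : List B) (ε : Fin ω.length → Bool) (k : ℕ) : W :=
  (((List.finRange ω.length).take k).map
    fun m => if ε m then cs.simple (ω.get m) else 1).prod

/-- The Kostant–Kumar sum
`c_ω = (−1)^l Σ_ε Π_k (s_{i₁}^{ε₁} ⋯ s_{i_k}^{ε_k} α_{i_k})⁻¹`, the sum over masks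
`ε ∈ {0,1}^l` with `s_{i₁}^{ε₁} ⋯ s_{i_l}^{ε_l} = id`, for a word `ω = (i₁, …, i_l)`;
for a reduced word of `w` this is the coefficient `c_w = c_{w,id}`.  Here `α : B → K`
gives the simple roots in the `W`-field `K = ℂ(𝔥)`. -/
noncomputable def cSum {M : CoxeterMatrix B} (cs : CoxeterSystem M W) (α : B → K)
    (ω : List B) : K :=
  (-1 : K) ^ ω.length *
    ∑ ε : Fin ω.length → Bool,
      if maskProdTake cs ω ε ω.length = 1 then
        ∏ k : Fin ω.length, (maskProdTake cs ω ε (k.1 + 1) • α (ω.get k))⁻¹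
      else 0

/-!
Reverse the word and the mask together. When the masked product is `1`, the prefix products of
the reversed mask are those of the original one, read backwards, so each factor of the reversed
sum is `s_{i₁}^{ε₁} ⋯ s_{i_{k-1}}^{ε_{k-1}} α_{i_k}` where the original sum has
`s_{i₁}^{ε₁} ⋯ s_{i_k}^{ε_k} α_{i_k}`. Because `s_i α_i = -α_i`, the two differ by
`(-1)^{ε_k}`. The total sign `(-1)^{|ε|}` is `1`, because a product of `|ε|` simple
reflections equal to `1` has even length. So `c_ω = c_{ω.reverse}`, and `ω.reverse` is a
reduced word for `w⁻¹`.
-/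

namespace CoxeterSystem

variable {M : CoxeterMatrix B} (cs : CoxeterSystem M W)

def sign (R : Type*) [Monoid R] [HasDistribNeg R] : W →* Rˣ :=
  cs.lift ⟨fun _ => -1, fun _ _ => by rw [neg_mul_neg, one_mul, one_pow]⟩

@[simp]
theorem sign_simple (R : Type*) [Monoid R] [HasDistribNeg R] (i : B) :
    cs.sign R (cs.simple i) = -1 :=
  cs.lift_apply_simple _ _

end CoxeterSystem

section Masks

variable {M : CoxeterMatrix B} (cs : CoxeterSystem M W) (ω : List B) (ε : Fin ω.length → Bool)

def maskLetter (m : Fin ω.length) : W :=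
  if ε m then cs.simple (ω.get m) else 1

theorem maskProdTake_eq (k : ℕ) :
    maskProdTake cs ω ε k =
      (((List.finRange ω.length).take k).map (maskLetter cs ω ε)).prod :=
  rfl

theorem maskLetter_inv (m : Fin ω.length) :
    (maskLetter cs ω ε m)⁻¹ = maskLetter cs ω ε m := by
  unfold maskLetter
  split_ifs <;> simp

theorem maskProdTake_length :
    maskProdTake cs ω ε ω.length =
      ((List.finRange ω.length).map (maskLetter cs ω ε)).prod := by
  rw [maskProdTake_eq, List.take_of_length_le (by simp)]

theorem maskProdTake_succ (k : Fin ω.length) :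
    maskProdTake cs ω ε (k.1 + 1) = maskProdTake cs ω ε k.1 * maskLetter cs ω ε k := by
  simp [maskProdTake_eq, List.take_add_one, k.2]

theorem maskProdTake_mul_drop (k : ℕ) :
    maskProdTake cs ω ε k * (((List.finRange ω.length).drop k).map (maskLetter cs ω ε)).prod =
      maskProdTake cs ω ε ω.length := by
  rw [maskProdTake_eq, maskProdTake_eq, ← List.prod_append, ← List.map_append,
    List.take_append_drop, List.take_of_length_le (by simp)]

theorem prod_sign_maskLetter_of_maskProdTake_eq_one {R : Type*} [CommRing R]
    (h : maskProdTake cs ω ε ω.length = 1) :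
    ∏ m, (if ε m then (-1 : R) else 1) = 1 := by
  have hsign : ∀ m, ((cs.sign R (maskLetter cs ω ε m) : Rˣ) : R) = if ε m then -1 else 1 := by
    intro m
    unfold maskLetter
    split_ifs <;> simp
  have hunits : ∏ m, cs.sign R (maskLetter cs ω ε m) = 1 := by
    simpa only [maskProdTake_length, map_list_prod, List.map_map, map_one, Fin.prod_univ_def,
      Function.comp_def]
      using congrArg (cs.sign R) h
  simpa only [hsign, Units.coe_prod, Units.val_one] using congrArg Units.val hunits

end Masks

section Reverse

variable {M : CoxeterMatrix B} (cs : CoxeterSystem M W) (ω : List B) (ε : Fin ω.length → Bool)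

def reverseIndexEquiv : Fin ω.reverse.length ≃ Fin ω.length :=
  (finCongr ω.length_reverse).trans Fin.revPerm

theorem get_reverse_eq_get_reverseIndexEquiv (m : Fin ω.reverse.length) :
    ω.reverse.get m = ω.get (reverseIndexEquiv ω m) := by
  simp only [List.get_eq_getElem, List.getElem_reverse, reverseIndexEquiv, Equiv.trans_apply,
    finCongr_apply, Fin.revPerm_apply, Fin.val_rev, Fin.val_cast]
  congr 1
  simp only [List.length_reverse] at m ⊢
  omega

theorem map_reverseIndexEquiv_finRange :
    (List.finRange ω.reverse.length).map (reverseIndexEquiv ω) =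
      (List.finRange ω.length).reverse := by
  apply List.ext_getElem (by simp)
  intro i h₁ h₂
  simp only [reverseIndexEquiv, Equiv.coe_trans, List.getElem_map, List.getElem_finRange,
    Function.comp_apply, finCongr_apply, Fin.revPerm_apply, List.getElem_reverse,
    List.length_finRange, Fin.ext_iff, Fin.val_rev, Fin.cast_mk]
  omega

theorem maskLetter_reverse :
    maskLetter cs ω.reverse (ε ∘ reverseIndexEquiv ω) =
      maskLetter cs ω ε ∘ reverseIndexEquiv ω := by
  funext m
  simp only [maskLetter, Function.comp_apply, get_reverse_eq_get_reverseIndexEquiv]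

theorem maskProdTake_reverse (k : ℕ) :
    maskProdTake cs ω.reverse (ε ∘ reverseIndexEquiv ω) k =
      (maskProdTake cs ω ε ω.length)⁻¹ * maskProdTake cs ω ε (ω.length - k) := by
  rw [maskProdTake_eq, maskLetter_reverse, ← List.map_map, List.map_take,
    map_reverseIndexEquiv_finRange, List.take_reverse, List.length_finRange, List.map_reverse,
    List.prod_reverse_noncomm, List.map_map, Function.comp_def]
  simp only [maskLetter_inv]
  rw [eq_inv_mul_iff_mul_eq, mul_inv_eq_iff_eq_mul, maskProdTake_mul_drop]

end Reverse

section Roots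

variable {M : CoxeterMatrix B} (cs : CoxeterSystem M W) (α : B → K)
  (hs : ∀ i : B, cs.simple i • α i = - α i) (ω : List B) (ε : Fin ω.length → Bool)
include hs

theorem smul_maskProdTake_succ (k : Fin ω.length) :
    maskProdTake cs ω ε (k.1 + 1) • α (ω.get k) =
      (if ε k then -1 else 1) * (maskProdTake cs ω ε k.1 • α (ω.get k)) := by
  rw [maskProdTake_succ, mul_smul, maskLetter]
  split_ifs <;> simp [hs]

theorem prod_inv_smul_maskProdTake_succ (h : maskProdTake cs ω ε ω.length = 1) :
    ∏ k : Fin ω.length, (maskProdTake cs ω ε (k.1 + 1) • α (ω.get k))⁻¹ =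
      ∏ k : Fin ω.length, (maskProdTake cs ω ε k.1 • α (ω.get k))⁻¹ := by
  have hsign_inv (k : Fin ω.length) :
      (if ε k then (-1 : K) else 1)⁻¹ = if ε k then -1 else 1 := by
    split_ifs <;> simp
  simp_rw [smul_maskProdTake_succ cs α hs, mul_inv, Finset.prod_mul_distrib, hsign_inv,
    prod_sign_maskLetter_of_maskProdTake_eq_one cs ω ε h, one_mul]

theorem cSum_reverse : cSum cs α ω.reverse = cSum cs α ω := by
  unfold cSum
  congr 1
  · rw [List.length_reverse]
  symm
  refine Fintype.sum_equiv ((reverseIndexEquiv ω).symm.arrowCongr (Equiv.refl Bool)) _ _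
    fun ε => ?_
  rw [show (reverseIndexEquiv ω).symm.arrowCongr (Equiv.refl Bool) ε = ε ∘ reverseIndexEquiv ω
    from rfl]
  have hfull : maskProdTake cs ω.reverse (ε ∘ reverseIndexEquiv ω) ω.reverse.length =
      (maskProdTake cs ω ε ω.length)⁻¹ := by
    rw [maskProdTake_reverse, List.length_reverse, Nat.sub_self]
    simp [maskProdTake_eq]
  rw [hfull, inv_eq_one]
  split_ifs with h
  · rw [prod_inv_smul_maskProdTake_succ cs α hs ω ε h]
    symm
    refine Fintype.prod_equiv (reverseIndexEquiv ω) _ _ fun k => ?_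
    rw [maskProdTake_reverse, h, inv_one, one_mul, get_reverse_eq_get_reverseIndexEquiv]
    -- `reverseIndexEquiv ω k` has value `ω.length - (k + 1)` by definition
    rfl
  · rfl

end Roots

theorem cSum_inv_general {M : CoxeterMatrix B} (cs : CoxeterSystem M W)
    (α : B → K)
    (hs : ∀ i : B, cs.simple i • α i = - α i)
    (hc : ∀ ω ω' : List B, cs.IsReduced ω → cs.IsReduced ω' →
      cs.wordProd ω = cs.wordProd ω' → cSum cs α ω = cSum cs α ω')
    (w : W) (ω ω' : List B)
    (hω : cs.IsReduced ω) (hωp : cs.wordProd ω = w)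
    (hω' : cs.IsReduced ω') (hω'p : cs.wordProd ω' = w⁻¹) :
    cSum cs α ω = cSum cs α ω' := by
  have hrev_reduced : cs.IsReduced ω.reverse := (cs.isReduced_reverse_iff ω).mpr hω
  have hrev_prod : cs.wordProd ω.reverse = cs.wordProd ω' := by
    rw [cs.wordProd_reverse, hωp, hω'p]
  calc cSum cs α ω = cSum cs α ω.reverse := (cSum_reverse cs α hs ω).symm
    _ = cSum cs α ω' := hc _ _ hrev_reduced hω' hrev_prod

/-- `c_w = c_{w⁻¹}`.  Independence of `c_w` from the chosen reduced
expression (a fact recorded in the statement) is hypothesis `hc`. -/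
theorem cSum_inv {M : CoxeterMatrix B} (cs : CoxeterSystem M W)
    (α : B → K) (hα : ∀ i, α i ≠ 0)
    (hs : ∀ i : B, cs.simple i • α i = - α i)
    (hc : ∀ ω ω' : List B, cs.IsReduced ω → cs.IsReduced ω' →
      cs.wordProd ω = cs.wordProd ω' → cSum cs α ω = cSum cs α ω')
    (w : W) (ω ω' : List B)
    (hω : cs.IsReduced ω) (hωp : cs.wordProd ω = w)
    (hω' : cs.IsReduced ω') (hω'p : cs.wordProd ω' = w⁻¹) :
    cSum cs α ω = cSum cs α ω' :=
  cSum_inv_general cs α hs hc w ω ω' hω hωp hω' hω'p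
end
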